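/- Suppose x_i, x_j, x_k are unit vectors in R^d, x_i and x_j share the same class with nearest center w_{y_i}, x_k belongs to a different class with center w_{y_k}, and the center-based triplet constraint x_iᵀ w_{y_i} - x_iᵀ w_{y_k} ≥ δ holds. If ‖x_j - w_{y_i}‖₂ ≤ ε and ‖x_k - w_{y_k}‖₂ ≤ ε, then x_iᵀ x_j - x_iᵀ x_k ≥ δ - 2ε. -/
import Mathlib

open Real Finset
open scoped RealInnerProductSpace

/-- Theorem 1 of the paper: the center-based triplet constraint with margin `δ` implies
the triplet constraint on the original examples with margin `δ - 2ε`. -/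
theorem center_triplet_implies_example_triplet (d : ℕ)
    (xi xj xk wyi wyk : EuclideanSpace ℝ (Fin d))
    (hxi : ‖xi‖ = 1) (hxj : ‖xj‖ = 1) (hxk : ‖xk‖ = 1)
    (δ ε : ℝ)
    (hcenter : ⟪xi, wyi⟫ - ⟪xi, wyk⟫ ≥ δ)
    (hj : ‖xj - wyi‖ ≤ ε) (hk : ‖xk - wyk‖ ≤ ε) :
    ⟪xi, xj⟫ - ⟪xi, xk⟫ ≥ δ - 2 * ε := by
  have h1 : |⟪xi, xj - wyi⟫| ≤ ε := by
    calc |⟪xi, xj - wyi⟫| ≤ ‖xi‖ * ‖xj - wyi‖ := abs_real_inner_le_norm _ _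
    _ ≤ ε := by rw [hxi, one_mul]; exact hj
  have h2 : |⟪xi, xk - wyk⟫| ≤ ε := by
    calc |⟪xi, xk - wyk⟫| ≤ ‖xi‖ * ‖xk - wyk‖ := abs_real_inner_le_norm _ _
    _ ≤ ε := by rw [hxi, one_mul]; exact hk
  have e1 : ⟪xi, xj⟫ = ⟪xi, wyi⟫ + ⟪xi, xj - wyi⟫ := by
    rw [inner_sub_right]; ring
  have e2 : ⟪xi, xk⟫ = ⟪xi, wyk⟫ + ⟪xi, xk - wyk⟫ := by
    rw [inner_sub_right]; ring
  rw [e1, e2]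
  have := abs_le.mp h1
  have := abs_le.mp h2
  linarith [this.1, this.2]
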